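/- Let F_Z(τ) be the product of the six genus-two theta constants with characteristics (0,0,0,0), (0,0,0,1), (0,0,1,0), (0,0,1,1), (0,1,1,0), (0,1,0,0). Then for every τ in the complex upper half plane, lim_{t → ∞} F_Z(diag(i t, τ)) = θ_{(0,0)}(τ)² · θ_{(0,1)}(τ)² · θ_{(1,0)}(τ)², where diag(i t, τ) denotes the diagonal 2 × 2 period matrix with entries i t and τ and t ranges over positive reals. -/

import Mathlib

open Complex

/-- The genus-one theta constant
`θ_{(a,b)}(τ) = ∑_{n ∈ ℤ} exp(πiτ(n + a/2)² + πi(n + a/2)b)`. -/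
noncomputable def theta1 (a b : ℤ) (τ : ℂ) : ℂ :=
  ∑' n : ℤ, Complex.exp (Real.pi * I * τ * ((n : ℂ) + (a : ℂ) / 2) ^ 2 +
    Real.pi * I * ((n : ℂ) + (a : ℂ) / 2) * (b : ℂ))

/-- The genus-two theta constant with characteristic `m = (a, b, c, d)` evaluated at the
diagonal period matrix `diag(τ₁, τ₂)`. -/
noncomputable def theta2diag (a b c d : ℤ) (τ₁ τ₂ : ℂ) : ℂ :=
  ∑' n : ℤ × ℤ, Complex.exp
    (Real.pi * I * (τ₁ * ((n.1 : ℂ) + (a : ℂ) / 2) ^ 2 +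
        τ₂ * ((n.2 : ℂ) + (b : ℂ) / 2) ^ 2) +
      Real.pi * I * (((n.1 : ℂ) + (a : ℂ) / 2) * (c : ℂ) +
        ((n.2 : ℂ) + (b : ℂ) / 2) * (d : ℂ)))

/-- The six-fold theta product `F_Z` evaluated at the diagonal period matrix `diag(τ₁, τ₂)`:
the product of the genus-two theta constants with characteristics
`(0,0,0,0), (0,0,0,1), (0,0,1,0), (0,0,1,1), (0,1,1,0), (0,1,0,0)`. -/
noncomputable def FZdiag (τ₁ τ₂ : ℂ) : ℂ :=
  theta2diag 0 0 0 0 τ₁ τ₂ * theta2diag 0 0 0 1 τ₁ τ₂ * theta2diag 0 0 1 0 τ₁ τ₂ *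
    theta2diag 0 0 1 1 τ₁ τ₂ * theta2diag 0 1 1 0 τ₁ τ₂ * theta2diag 0 1 0 0 τ₁ τ₂

/-! On the diagonal the genus-two theta series is a product of two genus-one series, so
`F_Z(diag(it, τ))` is `(θ_{(0,0)}(it) θ_{(0,1)}(it))³` times the claimed limit. As `im τ → ∞`
every term of the Jacobi theta series `∑ exp(2πinz + πin²τ)` except `n = 0` decays, so by
dominated convergence `θ_{(0,c)}(it) = jacobiTheta₂ (c/2) (it) → 1`. -/

open Filter Topology

lemma tendsto_jacobiTheta₂_term_comap_im_atTop (n : ℤ) (z : ℂ) :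
    Tendsto (jacobiTheta₂_term n z) (comap im atTop) (𝓝 (if n = 0 then 1 else 0)) := by
  by_cases hn : n = 0
  · subst hn
    convert tendsto_const_nhds using 2 with τ
    simp [jacobiTheta₂_term]
  rw [if_neg hn, tendsto_zero_iff_norm_tendsto_zero]
  simp_rw [norm_jacobiTheta₂_term]
  have hn2 : -Real.pi * (n : ℝ) ^ 2 < 0 :=
    mul_neg_of_neg_of_pos (neg_neg_of_pos Real.pi_pos) (by positivity)
  refine Real.tendsto_exp_atBot.comp (tendsto_atBot_add_const_right _ _ ?_)
  exact tendsto_comap.const_mul_atTop_of_neg hn2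

lemma tendsto_jacobiTheta₂_comap_im_atTop (z : ℂ) :
    Tendsto (jacobiTheta₂ z) (comap im atTop) (𝓝 1) := by
  have hbound : ∀ᶠ τ in comap im atTop, ∀ n : ℤ,
      ‖jacobiTheta₂_term n z τ‖ ≤ Real.exp (-Real.pi * (1 * n ^ 2 - 2 * |z.im| * |n|)) :=
    (eventually_ge_atTop 1).comap im |>.mono fun τ hτ =>
      norm_jacobiTheta₂_term_le one_pos le_rfl hτ
  have hlim := tendsto_tsum_of_dominated_convergence
    (by simpa using summable_pow_mul_jacobiTheta₂_term_bound |z.im| one_pos 0)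
    (fun n => tendsto_jacobiTheta₂_term_comap_im_atTop n z) hbound
  rwa [tsum_ite_eq] at hlim

noncomputable def theta1Term (a b : ℤ) (τ : ℂ) (n : ℤ) : ℂ :=
  cexp (Real.pi * I * τ * ((n : ℂ) + (a : ℂ) / 2) ^ 2 +
    Real.pi * I * ((n : ℂ) + (a : ℂ) / 2) * (b : ℂ))

lemma theta1_eq_tsum_theta1Term (a b : ℤ) (τ : ℂ) :
    theta1 a b τ = ∑' n, theta1Term a b τ n := rfl

lemma theta1Term_eq_mul_jacobiTheta₂_term (a b : ℤ) (τ : ℂ) (n : ℤ) :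
    theta1Term a b τ n = cexp (Real.pi * I * τ * ((a : ℂ) / 2) ^ 2 +
      Real.pi * I * ((a : ℂ) / 2) * b) * jacobiTheta₂_term n ((a * τ + b) / 2) τ := by
  rw [theta1Term, jacobiTheta₂_term, ← Complex.exp_add]
  ring_nf

lemma summable_norm_theta1Term (a b : ℤ) {τ : ℂ} (hτ : 0 < τ.im) :
    Summable fun n => ‖theta1Term a b τ n‖ := by
  simp_rw [theta1Term_eq_mul_jacobiTheta₂_term, norm_mul]
  exact ((summable_jacobiTheta₂_term_iff _ τ).mpr hτ).norm.mul_left _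

lemma theta1_zero_left (b : ℤ) (τ : ℂ) : theta1 0 b τ = jacobiTheta₂ (b / 2) τ := by
  simp_rw [theta1_eq_tsum_theta1Term, theta1Term_eq_mul_jacobiTheta₂_term]
  simp [jacobiTheta₂]

lemma theta2diag_eq_mul {τ₁ τ₂ : ℂ} (h₁ : 0 < τ₁.im) (h₂ : 0 < τ₂.im) (a b c d : ℤ) :
    theta2diag a b c d τ₁ τ₂ = theta1 a c τ₁ * theta1 b d τ₂ := by
  rw [theta1_eq_tsum_theta1Term, theta1_eq_tsum_theta1Term,
    tsum_mul_tsum_of_summable_norm (summable_norm_theta1Term a c h₁)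
      (summable_norm_theta1Term b d h₂), theta2diag]
  refine tsum_congr fun n => ?_
  rw [theta1Term, theta1Term, ← Complex.exp_add]
  ring_nf

lemma FZdiag_eq {τ₁ τ₂ : ℂ} (h₁ : 0 < τ₁.im) (h₂ : 0 < τ₂.im) :
    FZdiag τ₁ τ₂ = (theta1 0 0 τ₁ * theta1 0 1 τ₁) ^ 3 *
      (theta1 0 0 τ₂ ^ 2 * theta1 0 1 τ₂ ^ 2 * theta1 1 0 τ₂ ^ 2) := by
  simp only [FZdiag, theta2diag_eq_mul h₁ h₂]
  ring

lemma tendsto_I_mul_ofReal_comap_im_atTop :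
    Tendsto (fun t : ℝ => I * (t : ℂ)) atTop (comap im atTop) :=
  tendsto_comap_iff.mpr (tendsto_id.congr fun t => by simp)

lemma tendsto_theta1_zero_left_I_mul (b : ℤ) :
    Tendsto (fun t : ℝ => theta1 0 b (I * t)) atTop (𝓝 1) := by
  simp_rw [theta1_zero_left]
  exact (tendsto_jacobiTheta₂_comap_im_atTop _).comp tendsto_I_mul_ofReal_comap_im_atTop

/-- For every `τ` in the upper half plane,
`lim_{t → ∞} F_Z(diag(it, τ)) = θ_{(0,0)}(τ)² θ_{(0,1)}(τ)² θ_{(1,0)}(τ)²`. -/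
theorem FZdiag_tendsto (τ : ℂ) (hτ : 0 < τ.im) :
    Filter.Tendsto (fun t : ℝ => FZdiag (I * (t : ℂ)) τ) Filter.atTop
      (nhds (theta1 0 0 τ ^ 2 * theta1 0 1 τ ^ 2 * theta1 1 0 τ ^ 2)) := by
  have hlim := (((tendsto_theta1_zero_left_I_mul 0).mul
    (tendsto_theta1_zero_left_I_mul 1)).pow 3).mul_const
      (theta1 0 0 τ ^ 2 * theta1 0 1 τ ^ 2 * theta1 1 0 τ ^ 2)
  rw [mul_one, one_pow, one_mul] at hlim
  refine hlim.congr' ?_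
  filter_upwards [eventually_gt_atTop 0] with t ht
  rw [FZdiag_eq (by simpa using ht) hτ]
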